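/- arXiv:2507.12112 — 2 statements merged into one kernel-verified Lean document; each statement's English description precedes it below -/
import Mathlib

section
/- (Chung's lemma.) Let (b_n)_{n≥1} be a sequence of nonnegative real numbers, let 0 < s < 1 and t > s be reals, let c > 0 and c' > 0 be constants, let (c_n) be a sequence with c_n ≥ c for all n, and suppose there is n₀ such that for all n ≥ n₀: b_{n+1} ≤ (1 − c_n/n^s) b_n + c'/n^t. Then limsup_{n→∞} n^{t−s} b_n ≤ c'/c; in particular b_n = O(n^{−(t−s)}). -/
open Filter Asymptotics Finset Set

/-- `(1+x)^u ≤ 1 + (u e^u) x` for `0 ≤ x ≤ 1`, `0 ≤ u`. -/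
lemma chung_rpow_aux (u x : ℝ) (hu : 0 ≤ u) (hx : 0 ≤ x) (hx1 : x ≤ 1) :
    (1 + x) ^ u ≤ 1 + u * Real.exp u * x := by
  rcases eq_or_lt_of_le hx with h | h
  · simp [← h]
  have h1 : (0:ℝ) < 1 + x := by linarith
  rw [Real.rpow_def_of_pos h1]
  have hlog : Real.log (1 + x) ≤ x := by
    have := Real.log_le_sub_one_of_pos h1; linarith
  have h2 : Real.exp (u * Real.log (1 + x)) ≤ Real.exp (u * x) :=
    Real.exp_le_exp.2 (by nlinarith)
  have h3 : Real.exp (u * x) ≤ 1 + (u * x) * Real.exp (u * x) := by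
    have h4 : 1 - u * x ≤ Real.exp (-(u * x)) := by
      have := Real.add_one_le_exp (-(u * x)); linarith
    have h5 : Real.exp (u * x) * (1 - u * x) ≤ 1 := by
      calc Real.exp (u * x) * (1 - u * x) ≤ Real.exp (u * x) * Real.exp (-(u * x)) :=
            mul_le_mul_of_nonneg_left h4 (Real.exp_pos _).le
        _ = 1 := by rw [← Real.exp_add]; simp
    nlinarith
  have h6 : (u * x) * Real.exp (u * x) ≤ u * Real.exp u * x := by
    have h7 : Real.exp (u * x) ≤ Real.exp u := Real.exp_le_exp.2 (by nlinarith)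
    have := mul_le_mul_of_nonneg_left h7 (mul_nonneg hu hx)
    nlinarith
  calc Real.exp (Real.log (1 + x) * u) = Real.exp (u * Real.log (1 + x)) := by ring_nf
    _ ≤ Real.exp (u * x) := h2
    _ ≤ 1 + u * x * Real.exp (u * x) := h3
    _ ≤ 1 + u * Real.exp u * x := by linarith

/-- Key recursion lemma: if `a (n+1) ≤ (1 - d/n^s) a n + e/n^s` eventually, with
`0 < d`, `0 ≤ e`, `0 < s < 1`, then eventually `a n ≤ e/d + δ`. -/
lemma chung_rec_aux (a : ℕ → ℝ) (ha : ∀ n, 0 ≤ a n) (s d e : ℝ)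
    (hs0 : 0 < s) (hs1 : s < 1) (hd : 0 < d) (he : 0 ≤ e) (N : ℕ) (hN1 : 1 ≤ N)
    (hfac : ∀ n, N ≤ n → 0 ≤ 1 - d / (n : ℝ) ^ s)
    (hrec : ∀ n, N ≤ n → a (n + 1) ≤ (1 - d / (n : ℝ) ^ s) * a n + e / (n : ℝ) ^ s)
    {δ : ℝ} (hδ : 0 < δ) : ∀ᶠ n in atTop, a n ≤ e / d + δ := by
  set L := e / d with hL
  set E : ℕ → ℝ := fun n => max (a n - L) 0 with hE
  have hE0 : ∀ n, 0 ≤ E n := fun n => le_max_right _ _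
  have hnpos : ∀ n : ℕ, N ≤ n → (0:ℝ) < (n : ℝ) ^ s := by
    intro n hn
    exact Real.rpow_pos_of_pos (by exact_mod_cast lt_of_lt_of_le hN1 hn) s
  have hLid : ∀ n : ℕ, N ≤ n → (1 - d / (n : ℝ) ^ s) * L + e / (n : ℝ) ^ s = L := by
    intro n hn
    have h1 : ((n:ℝ) ^ s) ≠ 0 := (hnpos n hn).ne'
    field_simp [hL]
    linarith [show d * L = e by rw [hL]; field_simp]
  have key : ∀ n, N ≤ n → E (n + 1) ≤ (1 - d / (n : ℝ) ^ s) * E n := by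
    intro n hn
    have hp := hfac n hn
    rcases le_or_gt (a n) L with h | h
    · have h2 : a (n + 1) ≤ L := by
        calc a (n+1) ≤ (1 - d / (n : ℝ) ^ s) * a n + e / (n : ℝ) ^ s := hrec n hn
          _ ≤ (1 - d / (n : ℝ) ^ s) * L + e / (n : ℝ) ^ s := by
              have := mul_le_mul_of_nonneg_left h hp; linarith
          _ = L := hLid n hn
      have : E (n + 1) = 0 := max_eq_right (by linarith)
      rw [this]
      exact mul_nonneg hp (hE0 n)
    · have hEn : E n = a n - L := max_eq_left (by linarith)
      have h2 : a (n + 1) - L ≤ (1 - d / (n : ℝ) ^ s) * (a n - L) := by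
        have h3 := hrec n hn
        have h4 := hLid n hn
        nlinarith
      rw [hEn]
      refine max_le h2 (mul_nonneg hp (by linarith))
  have mono : ∀ n, N ≤ n → E (n + 1) ≤ E n := by
    intro n hn
    calc E (n+1) ≤ (1 - d / (n : ℝ) ^ s) * E n := key n hn
      _ ≤ 1 * E n := by
          apply mul_le_mul_of_nonneg_right _ (hE0 n)
          have : 0 < d / (n:ℝ)^s := div_pos hd (hnpos n hn)
          linarith
      _ = E n := one_mul _
  have mono' : ∀ m n, N ≤ m → m ≤ n → E n ≤ E m := by
    intro m n hm hmn
    induction n with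
    | zero => omega
    | succ k ih =>
      rcases eq_or_lt_of_le hmn with h | h
      · rw [h]
      · have hk : m ≤ k := by omega
        exact le_trans (mono k (le_trans hm hk)) (ih hk)
  -- there exists M ≥ N with E M ≤ δ
  have hsmall : ∃ M, N ≤ M ∧ E M ≤ δ := by
    by_contra hcon
    push_neg at hcon
    have hdecr : ∀ n, N ≤ n → E (n + 1) ≤ E n - d * δ / (n : ℝ) ^ s := by
      intro n hn
      have h1 := key n hn
      have h2 : δ < E n := hcon n hn
      have h3 : 0 < d / (n:ℝ)^s := div_pos hd (hnpos n hn)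
      have h4 : d / (n:ℝ)^s * δ ≤ d / (n:ℝ)^s * E n :=
        mul_le_mul_of_nonneg_left h2.le h3.le
      have : E (n+1) ≤ E n - d / (n:ℝ)^s * E n := by nlinarith
      calc E (n+1) ≤ E n - d / (n:ℝ)^s * E n := this
        _ ≤ E n - d / (n:ℝ)^s * δ := by linarith
        _ = E n - d * δ / (n:ℝ)^s := by ring
    have hsum : ∀ k : ℕ, E (N + k) ≤ E N - d * δ * ∑ j ∈ range k, (((N + j : ℕ) : ℝ) ^ s)⁻¹ := by
      intro k
      induction k with
      | zero => simp
      | succ k ih =>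
        have h1 := hdecr (N + k) (Nat.le_add_right N k)
        rw [sum_range_succ]
        have : d * δ / ((N + k : ℕ) : ℝ) ^ s = d * δ * (((N + k : ℕ) : ℝ) ^ s)⁻¹ := by
          ring
        rw [show N + (k+1) = (N + k) + 1 from rfl]
        rw [this] at h1
        linarith [mul_le_mul_of_nonneg_left (le_refl (0:ℝ)) (le_refl (0:ℝ))]
    -- partial sums tend to infinity
    have hns : ¬ Summable (fun n : ℕ => ((n : ℝ) ^ s)⁻¹) := by
      have : ¬ Summable (fun n : ℕ => (n : ℝ) ^ (-s)) := by
        rw [Real.summable_nat_rpow]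
        linarith
      intro h
      apply this
      refine h.congr (fun n => ?_)
      rw [Real.rpow_neg (Nat.cast_nonneg n)]
    have hns2 : ¬ Summable (fun j : ℕ => (((N + j : ℕ) : ℝ) ^ s)⁻¹) := by
      intro h
      apply hns
      have h' : Summable (fun j : ℕ => (((j + N : ℕ) : ℝ) ^ s)⁻¹) := by
        simpa [Nat.add_comm] using h
      exact (summable_nat_add_iff N).1 h'
    have hnonneg : ∀ j : ℕ, 0 ≤ (((N + j : ℕ) : ℝ) ^ s)⁻¹ := fun j =>
      inv_nonneg.2 (Real.rpow_nonneg (Nat.cast_nonneg _) s)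
    have htend : Tendsto (fun k => ∑ j ∈ range k, (((N + j : ℕ) : ℝ) ^ s)⁻¹) atTop atTop := by
      by_contra hcon2
      exact hns2 ((summable_iff_not_tendsto_nat_atTop_of_nonneg hnonneg).2 hcon2)
    have hdd : 0 < d * δ := mul_pos hd hδ
    obtain ⟨k, hk⟩ := (htend.eventually_ge_atTop ((E N + 1) / (d * δ))).exists
    have h5 : E N + 1 ≤ d * δ * ∑ j ∈ range k, (((N + j : ℕ) : ℝ) ^ s)⁻¹ := by
      rw [div_le_iff₀ hdd] at hk
      linarith
    have := hsum k
    have := hE0 (N + k)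
    linarith
  obtain ⟨M, hM, hEM⟩ := hsmall
  rw [eventually_atTop]
  refine ⟨M, fun n hn => ?_⟩
  have h1 : E n ≤ δ := le_trans (mono' M n hM hn) hEM
  have h2 : a n - L ≤ E n := le_max_left _ _
  have hLnn : 0 ≤ L := div_nonneg he hd.le
  linarith

/-- Chung's lemma: if `b_{n+1} ≤ (1 − c_n/n^s) b_n + c'/n^t` for all large
`n`, with `0 < s < 1`, `t > s`, `c_n ≥ c > 0` and `c' > 0`, then
`limsup_{n→∞} n^{t−s} b_n ≤ c'/c`; in particular `b_n = O(n^{−(t−s)})`. -/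
theorem stmt_14 (b cseq : ℕ → ℝ) (hb : ∀ n, 0 ≤ b n)
    (s t : ℝ) (hs0 : 0 < s) (hs1 : s < 1) (hts : s < t)
    (c c' : ℝ) (hc : 0 < c) (hc' : 0 < c')
    (hcn : ∀ n, c ≤ cseq n)
    (n₀ : ℕ)
    (hrec : ∀ n : ℕ, n₀ ≤ n → 1 ≤ n →
      b (n + 1) ≤ (1 - cseq n / (n : ℝ) ^ s) * b n + c' / (n : ℝ) ^ t) :
    limsup (fun n : ℕ => (n : ℝ) ^ (t - s) * b n) atTop ≤ c' / c ∧
    (fun n : ℕ => b n) =O[atTop] (fun n : ℕ => (n : ℝ) ^ (-(t - s))) := by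
  set u := t - s with hu_def
  have hu : 0 < u := by simp [hu_def]; linarith
  set a : ℕ → ℝ := fun n => (n : ℝ) ^ u * b n with ha_def
  have ha : ∀ n, 0 ≤ a n := fun n =>
    mul_nonneg (Real.rpow_nonneg (Nat.cast_nonneg n) u) (hb n)
  set K := u * Real.exp u with hK_def
  have hK : 0 < K := mul_pos hu (Real.exp_pos u)
  -- the main per-ε claim
  have claim : ∀ ε : ℝ, 0 < ε → ε < c → ∀ δ : ℝ, 0 < δ →
      ∀ᶠ n in atTop, a n ≤ (c' + ε) / (c - ε) + δ := by
    intro ε hε hεc δ hδ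
    -- eventual conditions
    have ev3 : ∀ᶠ n : ℕ in atTop, K ≤ ε * (n : ℝ) ^ (1 - s) := by
      have h1 : Tendsto (fun n : ℕ => (n : ℝ) ^ (1 - s)) atTop atTop :=
        (tendsto_rpow_atTop (by linarith)).comp tendsto_natCast_atTop_atTop
      filter_upwards [h1.eventually_ge_atTop (K / ε)] with n hn
      rw [div_le_iff₀ hε] at hn
      linarith [hn]
    have ev4 : ∀ᶠ n : ℕ in atTop, K * c' ≤ ε * (n : ℝ) := by
      have h1 : Tendsto (fun n : ℕ => (n : ℝ)) atTop atTop := tendsto_natCast_atTop_atTop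
      filter_upwards [h1.eventually_ge_atTop (K * c' / ε)] with n hn
      rw [div_le_iff₀ hε] at hn
      linarith
    have ev5 : ∀ᶠ n : ℕ in atTop, c - ε ≤ (n : ℝ) ^ s := by
      have h1 : Tendsto (fun n : ℕ => (n : ℝ) ^ s) atTop atTop :=
        (tendsto_rpow_atTop hs0).comp tendsto_natCast_atTop_atTop
      exact h1.eventually_ge_atTop _
    obtain ⟨N, hN⟩ := eventually_atTop.1
      ((((ev3.and ev4).and ev5).and (eventually_ge_atTop (max 1 n₀))))
    set N' := max N (max 1 n₀) with hN'_def
    have hN'1 : 1 ≤ N' := le_trans (le_max_left 1 n₀) (le_max_right _ _)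
    have hcond : ∀ n, N' ≤ n → (K ≤ ε * (n:ℝ)^(1-s) ∧ K * c' ≤ ε * (n:ℝ)) ∧
        c - ε ≤ (n:ℝ)^s := by
      intro n hn
      exact (hN n (le_trans (le_max_left _ _) hn)).1
    have hge : ∀ n, N' ≤ n → 1 ≤ n ∧ n₀ ≤ n := by
      intro n hn
      have h1 := le_trans (le_max_right N (max 1 n₀)) hn
      exact ⟨le_trans (le_max_left 1 n₀) h1, le_trans (le_max_right 1 n₀) h1⟩
    have hd : 0 < c - ε := by linarith
    have he : (0:ℝ) ≤ c' + ε := by linarith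
    have hfac' : ∀ n, N' ≤ n → 0 ≤ 1 - (c - ε) / (n : ℝ) ^ s := by
      intro n hn
      have hnp : (0:ℝ) < (n:ℝ)^s :=
        Real.rpow_pos_of_pos (by exact_mod_cast (hge n hn).1) s
      have := (hcond n hn).2
      rw [sub_nonneg, div_le_one hnp]
      exact this
    have hrec' : ∀ n, N' ≤ n →
        a (n + 1) ≤ (1 - (c - ε) / (n : ℝ) ^ s) * a n + (c' + ε) / (n : ℝ) ^ s := by
      intro n hn
      obtain ⟨n1, hn0⟩ := hge n hn
      obtain ⟨⟨hc3, hc4⟩, _hc5⟩ := hcond n hn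
      have hnr : (1:ℝ) ≤ (n:ℝ) := by exact_mod_cast n1
      have hnp : (0:ℝ) < (n:ℝ) := by linarith
      set P := ((n:ℝ) + 1) ^ u with hP_def
      set Q := (n:ℝ) ^ u with hQ_def
      set w := (n:ℝ) ^ s with hw_def
      have hwp : (0:ℝ) < w := Real.rpow_pos_of_pos hnp s
      have hQp : (0:ℝ) < Q := Real.rpow_pos_of_pos hnp u
      have hPp : (0:ℝ) < P := Real.rpow_pos_of_pos (by linarith) u
      have hW : (n:ℝ) ^ t = Q * w := by
        rw [hQ_def, hw_def, ← Real.rpow_add hnp]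
        congr 1
        simp [hu_def]
      have hQP : Q ≤ P := Real.rpow_le_rpow (by linarith) (by linarith) hu.le
      -- fact1 : P ≤ Q + K * Q / n
      have fact1 : P ≤ Q + K * Q / (n:ℝ) := by
        have hsplit : (n:ℝ) + 1 = (n:ℝ) * (1 + 1/(n:ℝ)) := by
          field_simp
        have hx1 : (1:ℝ)/(n:ℝ) ≤ 1 := by
          rw [div_le_one hnp]; exact hnr
        have hx0 : (0:ℝ) ≤ 1/(n:ℝ) := by positivity
        have h2 : (1 + 1/(n:ℝ)) ^ u ≤ 1 + K * (1/(n:ℝ)) := by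
          have := chung_rpow_aux u (1/(n:ℝ)) hu.le hx0 hx1
          rw [hK_def]; linarith
        calc P = ((n:ℝ) * (1 + 1/(n:ℝ))) ^ u := by rw [hP_def, ← hsplit]
          _ = Q * (1 + 1/(n:ℝ)) ^ u := by
              rw [Real.mul_rpow hnp.le (by positivity), hQ_def]
          _ ≤ Q * (1 + K * (1/(n:ℝ))) := by
              exact mul_le_mul_of_nonneg_left h2 hQp.le
          _ = Q + K * Q / (n:ℝ) := by ring
      -- fact1' : P ≤ Q + ε * Q / w
      have fact1' : P ≤ Q + ε * Q / w := by
        have h3 : K * Q / (n:ℝ) ≤ ε * Q / w := by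
          rw [div_le_div_iff₀ hnp hwp]
          have hid : (n:ℝ)^(1-s) * w = (n:ℝ) := by
            rw [hw_def, ← Real.rpow_add hnp]; simp
          have h4 : K * w ≤ ε * (n:ℝ) := by
            calc K * w ≤ ε * (n:ℝ)^(1-s) * w := mul_le_mul_of_nonneg_right hc3 hwp.le
              _ = ε * (n:ℝ) := by rw [mul_assoc, hid]
          calc K * Q * w = Q * (K * w) := by ring
            _ ≤ Q * (ε * (n:ℝ)) := mul_le_mul_of_nonneg_left h4 hQp.le
            _ = ε * Q * (n:ℝ) := by ring
        linarith
      -- coefficient inequality A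
      have factA : P * (1 - cseq n / w) ≤ Q * (1 - (c - ε) / w) := by
        have hcs := hcn n
        have h5 : P * (cseq n / w) ≥ P * (c / w) := by
          apply mul_le_mul_of_nonneg_left _ hPp.le
          gcongr
        have h6 : P * (c / w) ≥ Q * (c / w) := by
          apply mul_le_mul_of_nonneg_right hQP (by positivity)
        have h7 : Q * (1 - (c-ε)/w) = Q - Q * (c/w) + ε * Q / w := by
          field_simp; ring
        nlinarith
      -- coefficient inequality B
      have factB : P * (c' / (n:ℝ)^t) ≤ (c' + ε) / w := by
        rw [hW]
        have h8 : P * (c' / (Q * w)) ≤ (Q + K * Q / (n:ℝ)) * (c' / (Q * w)) :=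
          mul_le_mul_of_nonneg_right fact1 (by positivity)
        have h9 : (Q + K * Q / (n:ℝ)) * (c' / (Q * w)) = (c' + K * c' / (n:ℝ)) / w := by
          field_simp
        have h10 : K * c' / (n:ℝ) ≤ ε := by
          rw [div_le_iff₀ hnp]; linarith
        calc P * (c' / (Q * w)) ≤ (c' + K * c' / (n:ℝ)) / w := by rw [← h9]; exact h8
          _ ≤ (c' + ε) / w := by gcongr
      -- assemble
      have hb1 := hrec n hn0 n1
      have hcast : a (n + 1) = P * b (n + 1) := by
        rw [ha_def, hP_def]; push_cast; ring_nf
      calc a (n + 1) = P * b (n + 1) := hcast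
        _ ≤ P * ((1 - cseq n / w) * b n + c' / (n:ℝ)^t) :=
            mul_le_mul_of_nonneg_left hb1 hPp.le
        _ = (P * (1 - cseq n / w)) * b n + P * (c' / (n:ℝ)^t) := by ring
        _ ≤ (Q * (1 - (c-ε)/w)) * b n + (c' + ε) / w := by
            have := mul_le_mul_of_nonneg_right factA (hb n)
            linarith
        _ = (1 - (c-ε)/w) * a n + (c' + ε) / w := by rw [ha_def]; ring
    have := chung_rec_aux a ha s (c - ε) (c' + ε) hs0 hs1 hd he N' hN'1 hfac' hrec' hδ
    exact this
  constructor
  · -- limsup bound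
    have cob : IsCoboundedUnder (· ≤ ·) atTop a :=
      isCoboundedUnder_le_of_le atTop (fun n => ha n)
    have hls : ∀ ε ∈ Ioo (0:ℝ) c, limsup a atTop ≤ (c' + ε) / (c - ε) + ε := by
      intro ε hε
      exact limsup_le_of_le cob (claim ε hε.1 hε.2 ε hε.1)
    have htend : Tendsto (fun ε : ℝ => (c' + ε) / (c - ε) + ε) (nhdsWithin 0 (Ioi 0))
        (nhds (c' / c)) := by
      have hcont : ContinuousAt (fun ε : ℝ => (c' + ε) / (c - ε) + ε) 0 := by
        apply ContinuousAt.add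
        · exact ContinuousAt.div (by fun_prop) (by fun_prop) (by simpa using hc.ne')
        · fun_prop
      have := hcont.tendsto
      simp only [add_zero, sub_zero, zero_add] at this  -- hope normalizes f 0
      exact this.mono_left nhdsWithin_le_nhds
    refine ge_of_tendsto htend ?_
    filter_upwards [Ioo_mem_nhdsGT hc] with ε hε
    exact hls ε hε
  · -- big-O
    rw [isBigO_iff]
    refine ⟨(c' + c/2) / (c - c/2) + 1, ?_⟩
    filter_upwards [claim (c/2) (by linarith) (by linarith) 1 one_pos,
      eventually_ge_atTop 1] with n hn hn1
    have hnr : (1:ℝ) ≤ (n:ℝ) := by exact_mod_cast hn1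
    have hnp : (0:ℝ) < (n:ℝ) := by linarith
    have hup : (0:ℝ) < (n:ℝ) ^ u := Real.rpow_pos_of_pos hnp u
    have hneg : (n:ℝ) ^ (-(t - s)) = ((n:ℝ) ^ u)⁻¹ := by
      rw [← hu_def, Real.rpow_neg hnp.le]
    rw [Real.norm_of_nonneg (hb n), hneg,
      Real.norm_of_nonneg (by positivity)]
    have hn' : (n:ℝ) ^ u * b n ≤ (c' + c/2) / (c - c/2) + 1 := hn
    rw [← div_eq_mul_inv, le_div_iff₀ hup]
    nlinarith
end

section
/- Let (Ω, F, P) be a probability space with a filtration (F_t)_{t≥0}, let (V_t)_{t≥0} be a sequence of nonnegative integrable random variables with V_t measurable with respect to F_t, and let (φ_t)_{t≥0} be nonnegative reals with Σ_{t=0}^∞ φ_t < ∞. If for every t the conditional expectation satisfies E[V_{t+1} | F_t] ≤ (1 + φ_t) V_t + φ_t almost surely, then V_t converges almost surely to a finite random variable; in particular sup_t V_t < ∞ almost surely. -/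
open MeasureTheory Filter

/-- an almost-supermartingale bound: if `V_t ≥ 0` are integrable, adapted,
and `E[V_{t+1} | F_t] ≤ (1 + φ_t) V_t + φ_t` a.s. with `φ_t ≥ 0` summable, then `V_t`
converges a.s. to a finite limit; in particular it is a.s. bounded. -/
theorem stmt_15 {Ω : Type*} {m0 : MeasurableSpace Ω} (P : Measure Ω)
    [IsProbabilityMeasure P] (ℱ : Filtration ℕ m0)
    (V : ℕ → Ω → ℝ) (φ : ℕ → ℝ)
    (hVnn : ∀ t ω, 0 ≤ V t ω)
    (hVint : ∀ t, Integrable (V t) P)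
    (hadapted : ∀ t, StronglyMeasurable[ℱ t] (V t))
    (hφ : ∀ t, 0 ≤ φ t) (hφsum : Summable φ)
    (hrec : ∀ t, ∀ᵐ ω ∂P, (P[V (t + 1)|ℱ t]) ω ≤ (1 + φ t) * V t ω + φ t) :
    ∀ᵐ ω ∂P, (∃ Lω : ℝ, Tendsto (fun t => V t ω) atTop (nhds Lω)) ∧
      BddAbove (Set.range fun t => V t ω) := by
  -- the product `c t = ∏_{s<t} (1+φ s)`
  set c : ℕ → ℝ := fun t => ∏ s ∈ Finset.range t, (1 + φ s) with hc
  have hc1 : ∀ t, 1 ≤ c t := by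
    intro t
    show (1:ℝ) ≤ ∏ s ∈ Finset.range t, (1 + φ s)
    calc (1:ℝ) = ∏ _s ∈ Finset.range t, (1:ℝ) := by simp
      _ ≤ ∏ s ∈ Finset.range t, (1 + φ s) :=
          Finset.prod_le_prod (fun i _ => zero_le_one) (fun i _ => by linarith [hφ i])
  have hcpos : ∀ t, 0 < c t := fun t => lt_of_lt_of_le one_pos (hc1 t)
  have hcsucc : ∀ t, c (t + 1) = c t * (1 + φ t) := by
    intro t; simp [hc, Finset.prod_range_succ]
  have hcmono : Monotone c := by
    refine monotone_nat_of_le_succ fun t => ?_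
    rw [hcsucc t]
    nlinarith [hcpos t, hφ t]
  have hcbdd : ∀ t, c t ≤ Real.exp (∑' s, φ s) := by
    intro t
    calc c t ≤ ∏ s ∈ Finset.range t, Real.exp (φ s) :=
          Finset.prod_le_prod (fun i _ => by linarith [hφ i])
            (fun i _ => by linarith [Real.add_one_le_exp (φ i)])
      _ = Real.exp (∑ s ∈ Finset.range t, φ s) := by rw [Real.exp_sum]
      _ ≤ Real.exp (∑' s, φ s) :=
          Real.exp_le_exp.2 (Summable.sum_le_tsum _ (fun i _ => hφ i) hφsum)
  have hcconv : ∃ cinf : ℝ, Tendsto c atTop (nhds cinf) := by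
    refine ⟨⨆ t, c t, tendsto_atTop_ciSup hcmono ⟨Real.exp (∑' s, φ s), ?_⟩⟩
    rintro x ⟨t, rfl⟩; exact hcbdd t
  obtain ⟨cinf, hcinf⟩ := hcconv
  -- the tail sums `R t = ∑_{s≥t} φ s / c (s+1)`
  set g : ℕ → ℝ := fun s => φ s / c (s + 1) with hg
  have hgnn : ∀ s, 0 ≤ g s := fun s => div_nonneg (hφ s) (hcpos _).le
  have hgsum : Summable g := by
    refine Summable.of_nonneg_of_le hgnn (fun s => ?_) hφsum
    exact div_le_self (hφ s) (hc1 _)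
  set R : ℕ → ℝ := fun t => ∑' s, g (s + t) with hR
  have hRsum : ∀ t, Summable fun s => g (s + t) := fun t =>
    (summable_nat_add_iff t).2 hgsum
  have hRnn : ∀ t, 0 ≤ R t := fun t => tsum_nonneg fun s => hgnn _
  have hRrec : ∀ t, R t = g t + R (t + 1) := by
    intro t
    have := Summable.tsum_eq_zero_add (hRsum t)
    simp only [zero_add] at this
    rw [hR]; simp only; rw [this]
    congr 1
    apply tsum_congr
    intro s
    congr 1
    omega
  have hReq : ∀ t, R t = (∑' s, g s) - ∑ s ∈ Finset.range t, g s := by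
    intro t
    have := Summable.sum_add_tsum_nat_add t hgsum
    linarith [this]
  have hR0 : Tendsto R atTop (nhds 0) := by
    have h1 : Tendsto (fun t => ∑ s ∈ Finset.range t, g s) atTop (nhds (∑' s, g s)) :=
      hgsum.hasSum.tendsto_sum_nat
    have h2 : Tendsto (fun t => (∑' s, g s) - ∑ s ∈ Finset.range t, g s) atTop
        (nhds ((∑' s, g s) - (∑' s, g s))) := tendsto_const_nhds.sub h1
    rw [sub_self] at h2
    exact h2.congr fun t => (hReq t).symm
  -- the auxiliary supermartingale
  set U : ℕ → Ω → ℝ := fun t ω => (c t)⁻¹ * V t ω + R t with hU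
  have hUnn : ∀ t ω, 0 ≤ U t ω := fun t ω =>
    add_nonneg (mul_nonneg (inv_nonneg.2 (hcpos t).le) (hVnn t ω)) (hRnn t)
  have hUint : ∀ t, Integrable (U t) P := fun t =>
    ((hVint t).const_mul _).add (integrable_const _)
  have hUadp : StronglyAdapted ℱ U := fun t =>
    ((hadapted t).const_mul _).add stronglyMeasurable_const
  have hUsuper : Supermartingale U ℱ P := by
    refine supermartingale_nat hUadp hUint fun t => ?_
    have hce : P[U (t + 1)|ℱ t] =ᵐ[P]
        fun ω => (c (t + 1))⁻¹ * (P[V (t + 1)|ℱ t]) ω + R (t + 1) := by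
      have h1 : P[U (t + 1)|ℱ t] =ᵐ[P]
          P[fun ω => (c (t + 1))⁻¹ * V (t + 1) ω|ℱ t] + fun _ => R (t + 1) := by
        have h0 : P[U (t + 1)|ℱ t] =ᵐ[P]
            P[fun ω => (c (t + 1))⁻¹ * V (t + 1) ω|ℱ t] +
              P[(fun _ => R (t + 1) : Ω → ℝ)|ℱ t] :=
          condExp_add ((hVint (t + 1)).const_mul _) (integrable_const _) (ℱ t)
        rw [condExp_const (ℱ.le t)] at h0
        exact h0
      have h2 : P[fun ω => (c (t + 1))⁻¹ * V (t + 1) ω|ℱ t] =ᵐ[P]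
          (c (t + 1))⁻¹ • P[V (t + 1)|ℱ t] := by
        have := condExp_smul (μ := P) (m := ℱ t) ((c (t + 1))⁻¹) (V (t + 1))
        exact this
      filter_upwards [h1, h2] with ω h1ω h2ω
      simp only [Pi.add_apply, Pi.smul_apply, smul_eq_mul] at h1ω h2ω ⊢
      rw [h1ω, h2ω]
    filter_upwards [hce, hrec t] with ω hω hrecω
    rw [hω]
    have hb : (c (t + 1))⁻¹ * (P[V (t + 1)|ℱ t]) ω ≤
        (c (t + 1))⁻¹ * ((1 + φ t) * V t ω + φ t) :=
      mul_le_mul_of_nonneg_left hrecω (inv_nonneg.2 (hcpos _).le)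
    have heq : (c (t + 1))⁻¹ * ((1 + φ t) * V t ω + φ t) + R (t + 1) = U t ω := by
      rw [hU]
      simp only
      rw [hRrec t]
      simp only [hg]
      rw [hcsucc t]
      have h1 : (1 : ℝ) + φ t ≠ 0 := ne_of_gt (by linarith [hφ t])
      have h2 : c t ≠ 0 := (hcpos t).ne'
      field_simp
      ring
    calc (c (t + 1))⁻¹ * (P[V (t + 1)|ℱ t]) ω + R (t + 1)
        ≤ (c (t + 1))⁻¹ * ((1 + φ t) * V t ω + φ t) + R (t + 1) := by linarith
      _ = U t ω := heq
  -- L¹ bound and convergence of U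
  have hUL1 : ∀ n, eLpNorm (U n) 1 P ≤ ENNReal.ofReal (∫ ω, U 0 ω ∂P) := by
    intro n
    have hint : ∫ ω, U n ω ∂P ≤ ∫ ω, U 0 ω ∂P := by
      have := hUsuper.setIntegral_le (Nat.zero_le n) (MeasurableSet.univ)
      simpa [setIntegral_univ] using this
    have h1 : eLpNorm (U n) 1 P = ENNReal.ofReal (∫ ω, ‖U n ω‖ ∂P) := by
      rw [eLpNorm_one_eq_lintegral_enorm,
        ← ofReal_integral_norm_eq_lintegral_enorm (hUint n)]
    rw [h1]
    apply ENNReal.ofReal_le_ofReal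
    calc ∫ ω, ‖U n ω‖ ∂P = ∫ ω, U n ω ∂P := by
          congr 1; funext ω; exact Real.norm_of_nonneg (hUnn n ω)
      _ ≤ ∫ ω, U 0 ω ∂P := hint
  have hUconv : ∀ᵐ ω ∂P, ∃ L, Tendsto (fun n => U n ω) atTop (nhds L) := by
    have hsub : Submartingale (-U) ℱ P := hUsuper.neg
    have hbdd : ∀ n, eLpNorm ((-U) n) 1 P ≤ (∫ ω, U 0 ω ∂P).toNNReal := by
      intro n
      rw [Pi.neg_apply, eLpNorm_neg]
      refine (hUL1 n).trans ?_
      rw [ENNReal.ofReal]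
    filter_upwards [hsub.exists_ae_tendsto_of_bdd hbdd] with ω ⟨L, hL⟩
    exact ⟨-L, by simpa using hL.neg⟩
  -- conclusion
  filter_upwards [hUconv] with ω ⟨L, hL⟩
  have hVconv : Tendsto (fun t => V t ω) atTop (nhds (cinf * (L - 0))) := by
    have h1 : Tendsto (fun t => c t * (U t ω - R t)) atTop (nhds (cinf * (L - 0))) :=
      hcinf.mul (hL.sub hR0)
    refine h1.congr fun t => ?_
    rw [hU]
    simp only
    rw [add_sub_cancel_right, ← mul_assoc, mul_inv_cancel₀ (hcpos t).ne', one_mul]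
  exact ⟨⟨cinf * (L - 0), hVconv⟩, hVconv.bddAbove_range⟩
end
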